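/- arXiv:2008.03544 — 4 statements merged into one kernel-verified Lean document; each statement's English description precedes it below -/
import Mathlib

section
/- Let L be the weighted Laplacian of a connected undirected graph with positive weights and Λ = M B^T for a fixed matrix M. Then for all sufficiently small |κ|, the matrix L - κΛ has a simple zero eigenvalue with eigenvector 1_n, and all its other eigenvalues have positive real part. -/
open Matrix

noncomputable def inc (n e : ℕ) (tl hd : Fin e → Fin n) : Matrix (Fin n) (Fin e) ℝ :=
  Matrix.of fun i k => if i = tl k then 1 else if i = hd k then -1 else 0

def Conn (n e : ℕ) (tl hd : Fin e → Fin n) : Prop :=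
  ∀ i j : Fin n, Relation.ReflTransGen
    (fun a b => ∃ k, (tl k = a ∧ hd k = b) ∨ (tl k = b ∧ hd k = a)) i j

/-!
Every `L - κΛ` kills `1ₙ` because `Λ = M Bᵀ` and `Bᵀ 1ₙ = 0`, so its characteristic polynomial is
`X · Q_κ` (`Q_κ` its `divX`), and it suffices to keep the roots of `Q_κ` out of the closed half-plane
`Re z ≤ 0`. At `κ = 0` the Laplacian is symmetric positive semidefinite, and connectivity makes its
kernel the line spanned by `1ₙ`, so the roots of `Q_0` are its positive eigenvalues. The
coefficients of `Q_κ` depend continuously on `κ`; Cauchy's bound then confines the roots of `Q_κ`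
for `κ` near `0` to a fixed ball, and on the compact part of the half-plane inside that ball
`Q_κ` stays nonzero by joint continuity.
-/

open Polynomial Filter Topology

namespace Polynomial

theorem Monic.norm_lt_of_isRoot {K : Type*} [NormedDivisionRing K] {p : K[X]} (hp : p.Monic)
    {a : K} (h : p.IsRoot a) : ‖a‖ < ∑ i ∈ Finset.range p.natDegree, ‖p.coeff i‖ + 1 := by
  have hcauchy : cauchyBound p ≤ ∑ i ∈ Finset.range p.natDegree, ‖p.coeff i‖₊ + 1 := by
    rw [cauchyBound, hp.leadingCoeff, nnnorm_one, div_one]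
    gcongr
    exact Finset.sup_le fun i hi => Finset.single_le_sum (f := fun i => ‖p.coeff i‖₊) (by simp) hi
  have hlt := (h.norm_lt_cauchyBound hp.ne_zero).trans_le hcauchy
  rw [← NNReal.coe_lt_coe] at hlt
  simpa using hlt

theorem Monic.divX {R : Type*} [Semiring R] {p : R[X]} (hp : p.Monic) (h : p.natDegree ≠ 0) :
    p.divX.Monic := by
  rw [Monic.def, Polynomial.leadingCoeff, natDegree_divX_eq_natDegree_tsub_one, coeff_divX,
    Nat.sub_add_cancel (Nat.one_le_iff_ne_zero.mpr h)]
  exact hp.coeff_natDegree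

theorem roots_eq_zero_cons_roots_divX {R : Type*} [CommRing R] [IsDomain R] {p : R[X]}
    (hp : p ≠ 0) (h0 : p.IsRoot 0) : p.roots = 0 ::ₘ p.divX.roots := by
  have hX : X * p.divX = p := by
    simpa [coeff_zero_eq_eval_zero, h0.eq_zero] using X_mul_divX_add p
  rw [← hX] at hp
  conv_lhs => rw [← hX]
  rw [roots_mul hp, roots_X, Multiset.singleton_add]

theorem rootMultiplicity_zero_eq_one_and_re_pos {p : ℂ[X]} (hp : p ≠ 0)
    (h0 : p.IsRoot 0) (hdivX : ∀ z : ℂ, z.re ≤ 0 → ¬ p.divX.IsRoot z) :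
    p.rootMultiplicity 0 = 1 ∧ ∀ μ ∈ p.roots, μ ≠ 0 → 0 < μ.re := by
  have hsplit := roots_eq_zero_cons_roots_divX hp h0
  have hpos μ (hμ : μ ∈ p.divX.roots) : 0 < μ.re :=
    not_le.mp fun hre => hdivX μ hre (isRoot_of_mem_roots hμ)
  refine ⟨?_, fun μ hμ hμ0 => hpos μ ?_⟩
  · rw [← count_roots, hsplit, Multiset.count_cons_self, add_eq_right, Multiset.count_eq_zero]
    exact fun h => (hpos 0 h).false
  · rw [hsplit] at hμ
    exact (Multiset.mem_cons.mp hμ).resolve_left hμ0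

end Polynomial

theorem Continuous.charpoly_coeff {X n R : Type*} [TopologicalSpace X] [Fintype n]
    [DecidableEq n] [CommRing R] [TopologicalSpace R] [IsTopologicalRing R] {f : X → Matrix n n R}
    (hf : Continuous f) (i : ℕ) : Continuous fun x => (f x).charpoly.coeff i := by
  have h x : (f x).charpoly.coeff i =
      MvPolynomial.eval (fun p : n × n => f x p.1 p.2) ((charpoly.univ R n).coeff i) :=
    (charpoly.univ_coeff_eval₂Hom n (RingHom.id R) (fun p : n × n => f x p.1 p.2) i).symm
  simp only [h]
  exact (MvPolynomial.continuous_eval _).comp (continuous_pi fun p => hf.matrix_elem p.1 p.2)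

theorem eventually_forall_not_isRoot {K T : Type*} [NormedField K] [ProperSpace K]
    [TopologicalSpace T] {p : T → K[X]} {d : ℕ} (hmonic : ∀ t, (p t).Monic)
    (hdeg : ∀ t, (p t).natDegree = d) (hcoeff : ∀ i, Continuous fun t => (p t).coeff i)
    {S : Set K} (hS : IsClosed S) {t₀ : T} (h₀ : ∀ z ∈ S, ¬ (p t₀).IsRoot z) :
    ∀ᶠ t in 𝓝 t₀, ∀ z ∈ S, ¬ (p t).IsRoot z := by
  set g : T → ℝ := fun t => ∑ i ∈ Finset.range d, ‖(p t).coeff i‖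
  have hg : Continuous g := continuous_finsetSum _ fun i _ => (hcoeff i).norm
  have heval : Continuous fun q : T × K => (p q.1).eval q.2 := by
    simp only [eval_eq_sum_range, hdeg]
    exact continuous_finsetSum _ fun i _ =>
      ((hcoeff i).comp continuous_fst).mul (continuous_snd.pow i)
  have hK : IsCompact (S ∩ Metric.closedBall 0 (g t₀ + 2)) :=
    (isCompact_closedBall 0 _).inter_left hS
  have hnear : ∀ᶠ t in 𝓝 t₀, ∀ z ∈ S ∩ Metric.closedBall 0 (g t₀ + 2), ¬ (p t).IsRoot z :=
    hK.eventually_forall_of_forall_eventually fun z hz =>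
      heval.continuousAt.eventually_ne (h₀ z hz.1)
  filter_upwards [hnear, hg.continuousAt.eventually_lt continuousAt_const (lt_add_one (g t₀))]
    with t hnear hgt z hz hroot
  have hbound := (hmonic t).norm_lt_of_isRoot hroot
  rw [hdeg] at hbound
  exact hnear z ⟨hz, mem_closedBall_zero_iff.mpr (by linarith)⟩ hroot

namespace Matrix

variable {ι : Type*} [Fintype ι] [DecidableEq ι]

theorem isRoot_charpoly_zero_of_mulVec_eq_zero {K : Type*} [Field K] {A : Matrix ι ι K}
    {v : ι → K} (hv : v ≠ 0) (hAv : A *ᵥ v = 0) :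
    A.charpoly.IsRoot 0 := by
  rw [IsRoot.def, eval_charpoly, map_zero, zero_sub, det_neg,
    exists_mulVec_eq_zero_iff.mp ⟨v, hv, hAv⟩, mul_zero]

theorem IsHermitian.roots_charpoly_map_ofReal {A : Matrix ι ι ℝ} (hA : A.IsHermitian) :
    (A.map Complex.ofReal).charpoly.roots =
      Finset.univ.val.map fun i => (hA.eigenvalues i : ℂ) := by
  change (A.map Complex.ofRealHom).charpoly.roots = _
  rw [charpoly_map, hA.charpoly_eq, Polynomial.map_prod, roots_prod]
  · simp
  · simp [Finset.prod_ne_zero_iff, X_sub_C_ne_zero]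

theorem PosSemidef.not_isRoot_divX_charpoly_map_ofReal {A : Matrix ι ι ℝ} (hA : A.PosSemidef)
    (hrank : A.rank + 1 = Fintype.card ι) {z : ℂ} (hz : z.re ≤ 0) :
    ¬ (A.map Complex.ofReal).charpoly.divX.IsRoot z := by
  set P := (A.map Complex.ofReal).charpoly
  have hroots := hA.1.roots_charpoly_map_ofReal
  have hcount : P.roots.count 0 = 1 := by
    have hcompl := Fintype.card_subtype_compl fun i => hA.1.eigenvalues i = 0
    rw [← hA.1.rank_eq_card_non_zero_eigs] at hcompl
    rw [hroots, Multiset.count_map, ← Finset.filter_val, Finset.card_val]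
    simp only [eq_comm (a := (0 : ℂ)), Complex.ofReal_eq_zero]
    rw [← Fintype.card_subtype]
    have := Fintype.card_subtype_le fun i => hA.1.eigenvalues i = 0
    omega
  have hsplit : P.roots = 0 ::ₘ P.divX.roots :=
    roots_eq_zero_cons_roots_divX (charpoly_monic _).ne_zero
      (isRoot_of_mem_roots (Multiset.count_pos.mp (hcount ▸ one_pos)))
  intro hroot
  have hdivX : P.divX ≠ 0 := ((charpoly_monic _).divX (by simp [← hrank])).ne_zero
  have hmem : z ∈ P.roots := hsplit ▸ Multiset.mem_cons_of_mem ((mem_roots hdivX).mpr hroot)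
  rw [hroots] at hmem
  obtain ⟨i, -, rfl⟩ := Multiset.mem_map.mp hmem
  have hi : hA.1.eigenvalues i = 0 := le_antisymm (by simpa using hz) (hA.eigenvalues_nonneg i)
  rw [hi, Complex.ofReal_zero] at hroot
  rw [hsplit, Multiset.count_cons_self, add_eq_right, Multiset.count_eq_zero] at hcount
  exact hcount ((mem_roots hdivX).mpr hroot)

theorem posSemidef_mul_diagonal_mul_transpose {m e : Type*} [Fintype m] [Fintype e]
    [DecidableEq e] (B : Matrix m e ℝ) {w : e → ℝ} (hw : ∀ k, 0 ≤ w k) :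
    (B * diagonal w * Bᵀ).PosSemidef := by
  simpa [conjTranspose_eq_transpose_of_trivial] using
    (PosSemidef.diagonal fun k => hw k).mul_mul_conjTranspose_same B

theorem dotProduct_mul_mul_transpose_mulVec {m e R : Type*} [Fintype m] [Fintype e]
    [CommSemiring R] (B : Matrix m e R) (D : Matrix e e R) (x : m → R) :
    x ⬝ᵥ ((B * D * Bᵀ) *ᵥ x) = (Bᵀ *ᵥ x) ⬝ᵥ (D *ᵥ (Bᵀ *ᵥ x)) := by
  rw [← mulVec_mulVec, ← mulVec_mulVec, dotProduct_mulVec, ← mulVec_transpose]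

end Matrix

section Incidence

variable {n e : ℕ} {tl hd : Fin e → Fin n}

theorem inc_transpose_mulVec_apply (hloop : ∀ k, tl k ≠ hd k) (x : Fin n → ℝ) (k : Fin e) :
    ((inc n e tl hd)ᵀ *ᵥ x) k = x (tl k) - x (hd k) := by
  simp [inc, mulVec, dotProduct, ite_mul, Finset.sum_ite, Finset.filter_ne', Finset.filter_eq',
    (hloop k).symm, sub_eq_add_neg]

theorem inc_transpose_mulVec_one (hloop : ∀ k, tl k ≠ hd k) : (inc n e tl hd)ᵀ *ᵥ 1 = 0 := by
  ext k
  simp [inc_transpose_mulVec_apply hloop]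

theorem Conn.eq_of_inc_transpose_mulVec_eq_zero (hconn : Conn n e tl hd)
    (hloop : ∀ k, tl k ≠ hd k) {x : Fin n → ℝ} (hx : (inc n e tl hd)ᵀ *ᵥ x = 0) (i j : Fin n) :
    x i = x j := by
  have hedge k : x (tl k) = x (hd k) := by
    simpa [inc_transpose_mulVec_apply hloop, sub_eq_zero] using congrFun hx k
  induction hconn i j with
  | refl => rfl
  | tail _ hbc ih =>
    obtain ⟨k, ⟨rfl, rfl⟩ | ⟨rfl, rfl⟩⟩ := hbc
    · exact ih.trans (hedge k)
    · exact ih.trans (hedge k).symm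

theorem Conn.ker_laplacian (hconn : Conn n e tl hd) (hloop : ∀ k, tl k ≠ hd k)
    {w : Fin e → ℝ} (hw : ∀ k, 0 < w k) :
    LinearMap.ker (inc n e tl hd * diagonal w * (inc n e tl hd)ᵀ).mulVecLin =
      Submodule.span ℝ {1} := by
  set B := inc n e tl hd
  ext x
  rw [LinearMap.mem_ker, mulVecLin_apply, Submodule.mem_span_singleton]
  constructor
  · intro hx
    have hquad := dotProduct_mul_mul_transpose_mulVec B (diagonal w) x
    rw [hx, dotProduct_zero] at hquad
    have hBx : Bᵀ *ᵥ x = 0 := by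
      by_contra h
      have hpos := (posDef_diagonal_iff.mpr hw).dotProduct_mulVec_pos h
      rw [star_trivial, ← hquad] at hpos
      exact hpos.false
    rcases isEmpty_or_nonempty (Fin n) with _ | ⟨⟨i₀⟩⟩
    · exact ⟨0, Subsingleton.elim _ _⟩
    · exact ⟨x i₀, funext fun i => by
        simpa using hconn.eq_of_inc_transpose_mulVec_eq_zero hloop hBx i₀ i⟩
  · rintro ⟨c, rfl⟩
    rw [mulVec_smul, ← mulVec_mulVec, inc_transpose_mulVec_one hloop, mulVec_zero, smul_zero]

theorem Conn.rank_laplacian (hconn : Conn n e tl hd) (hloop : ∀ k, tl k ≠ hd k)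
    {w : Fin e → ℝ} (hw : ∀ k, 0 < w k) [NeZero n] :
    (inc n e tl hd * diagonal w * (inc n e tl hd)ᵀ).rank + 1 = n := by
  have h := LinearMap.finrank_range_add_finrank_ker
    (inc n e tl hd * diagonal w * (inc n e tl hd)ᵀ).mulVecLin
  rwa [hconn.ker_laplacian hloop hw, finrank_span_singleton one_ne_zero,
    Module.finrank_fin_fun] at h

end Incidence

/-- For `L` the Laplacian of a connected graph with positive weights and
`Λ = M Bᵀ`, for all sufficiently small `|κ|` the matrix `L - κΛ` has a simple
zero eigenvalue with eigenvector `1ₙ` and all other eigenvalues with positive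
real part. -/
theorem stmt3 (n e : ℕ) (hn : 2 ≤ n) (tl hd : Fin e → Fin n) (hloop : ∀ k, tl k ≠ hd k)
    (hconn : Conn n e tl hd) (w : Fin e → ℝ) (hw : ∀ k, 0 < w k)
    (M : Matrix (Fin n) (Fin e) ℝ) :
    ∃ ε > (0:ℝ), ∀ κ : ℝ, |κ| < ε →
      (inc n e tl hd * Matrix.diagonal w * (inc n e tl hd)ᵀ - κ • (M * (inc n e tl hd)ᵀ)) *ᵥ
          (1 : Fin n → ℝ) = 0 ∧
      Polynomial.rootMultiplicity (0:ℂ)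
          (Matrix.charpoly ((inc n e tl hd * Matrix.diagonal w * (inc n e tl hd)ᵀ
            - κ • (M * (inc n e tl hd)ᵀ)).map Complex.ofReal)) = 1 ∧
      ∀ μ ∈ (Matrix.charpoly ((inc n e tl hd * Matrix.diagonal w * (inc n e tl hd)ᵀ
            - κ • (M * (inc n e tl hd)ᵀ)).map Complex.ofReal)).roots,
        μ ≠ 0 → 0 < μ.re := by
  have : NeZero n := ⟨by omega⟩
  set B := inc n e tl hd
  set L := B * diagonal w * Bᵀ
  set A : ℝ → Matrix (Fin n) (Fin n) ℝ := fun κ => L - κ • (M * Bᵀ)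
  have hA1 κ : A κ *ᵥ 1 = 0 := by
    simp [A, L, sub_mulVec, smul_mulVec, ← mulVec_mulVec, B, inc_transpose_mulVec_one hloop]
  have hcont : Continuous fun κ => (A κ).map Complex.ofReal :=
    (continuous_const.sub (continuous_id.smul continuous_const)).matrix_map
      Complex.continuous_ofReal
  have hL : L.PosSemidef := posSemidef_mul_diagonal_mul_transpose B fun k => (hw k).le
  have hbase z (hz : z ∈ {z : ℂ | z.re ≤ 0}) :
      ¬ ((A 0).map Complex.ofReal).charpoly.divX.IsRoot z := by
    simpa [A] using hL.not_isRoot_divX_charpoly_map_ofReal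
      (by rw [Fintype.card_fin]; exact hconn.rank_laplacian hloop hw) hz
  have hnear := eventually_forall_not_isRoot
    (p := fun κ => ((A κ).map Complex.ofReal).charpoly.divX) (d := n - 1) (t₀ := 0)
    (fun κ => (charpoly_monic _).divX (by rw [charpoly_natDegree_eq_dim, Fintype.card_fin]; omega))
    (fun κ => by
      rw [natDegree_divX_eq_natDegree_tsub_one, charpoly_natDegree_eq_dim, Fintype.card_fin])
    (fun i => by simpa only [coeff_divX] using hcont.charpoly_coeff (i + 1))
    (isClosed_le Complex.continuous_re continuous_const) hbase
  obtain ⟨ε, hε, hsmall⟩ := Metric.eventually_nhds_iff.mp hnear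
  refine ⟨ε, hε, fun κ hκ => ⟨hA1 κ, ?_⟩⟩
  have h0 : ((A κ).map Complex.ofReal).charpoly.IsRoot 0 := by
    change ((A κ).map Complex.ofRealHom).charpoly.IsRoot 0
    simpa [charpoly_map] using
      (isRoot_charpoly_zero_of_mulVec_eq_zero one_ne_zero (hA1 κ)).map (f := Complex.ofRealHom)
  exact rootMultiplicity_zero_eq_one_and_re_pos (charpoly_monic _).ne_zero h0
    fun z hz => hsmall (by simpa using hκ) z hz
end

section
/- Let G be a tree with incidence matrix B, uniform weights w_k = w* > 0, and let M̂ be any motion-parameter matrix with Λ̂ = M̂ B̄^T (with B̄ = B ⊗ I_m) satisfying M̂ z* = 1_n ⊗ v* for the target relative positions z* = B̄^T p*. If |κ| < w* λ_min(B̄^T B̄) / ||B̄^T M̂||₂, then the error e(t) = B̄^T p(t) - z* along solutions of ṗ = -(L̄ - κΛ̂)p + L̄ p* satisfies dV/dt ≤ -α V for V = ||e||²/2 and some α > 0; hence e(t) → 0 exponentially and ṗ(t) → κ(1_n ⊗ v*). -/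
/-!
Write `e = B̄ᵀp - z*`. Since `M̂ z* = 1ₙ ⊗ v*` and `B̄ᵀ (1ₙ ⊗ v*) = 0`, the closed loop gives
`ė = -w* B̄ᵀB̄ e + κ B̄ᵀM̂ e`, so `d(‖e‖²/2)/dt ≤ -(w* λ_min - |κ| ‖B̄ᵀM̂‖₂) ‖e‖²`, and the bound on
`κ` makes this rate positive. `B̄ᵀ` kills `1ₙ ⊗ v*` because every column of the incidence matrix
sums to zero: a loop would be the only exception, and a connected graph with `n - 1` edges has
none, since a loop would make the rows of its incidence matrix linearly independent.
Finally `ṗ = -w* B̄ e + κ M̂ e + κ (1ₙ ⊗ v*)` tends to `κ (1ₙ ⊗ v*)`.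
-/

open Matrix Kronecker Filter Topology

lemma kronecker_one_transpose_mulVec {R ι ι' ν : Type*} [CommSemiring R] [Fintype ι]
    [Fintype ν] [DecidableEq ν] (A : Matrix ι ι' R) (v : ν → R) :
    (A ⊗ₖ (1 : Matrix ν ν R))ᵀ *ᵥ (fun il => v il.2) = fun kj => (∑ i, A i kj.1) * v kj.2 := by
  ext ⟨k, j⟩
  simp [mulVec, dotProduct, Fintype.sum_prod_type, one_apply, Finset.sum_mul]

lemma Matrix.IsHermitian.mul_dotProduct_self_le {ι : Type*} [Fintype ι] [DecidableEq ι]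
    {S : Matrix ι ι ℝ} (hS : S.IsHermitian) {l : ℝ}
    (hl : ∀ (ν : ℝ) (v : ι → ℝ), v ≠ 0 → S *ᵥ v = ν • v → l ≤ ν) (x : ι → ℝ) :
    l * (x ⬝ᵥ x) ≤ x ⬝ᵥ (S *ᵥ x) := by
  have hT : (S - l • 1).IsHermitian := hS.sub (isHermitian_one.smul (IsSelfAdjoint.all l))
  have hpsd : (S - l • 1).PosSemidef := by
    refine hT.posSemidef_iff_eigenvalues_nonneg.2 fun i => ?_
    have hv := hT.mulVec_eigenvectorBasis i
    rw [sub_mulVec, smul_mulVec, one_mulVec, sub_eq_iff_eq_add, ← add_smul] at hv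
    have hne : ⇑(hT.eigenvectorBasis i) ≠ 0 := fun h =>
      hT.eigenvectorBasis.orthonormal.ne_zero i (by ext j; exact congrFun h j)
    have := hl _ _ hne hv
    simp only [Pi.zero_apply]
    linarith
  have := hpsd.dotProduct_mulVec_nonneg x
  simp only [star_trivial, sub_mulVec, smul_mulVec, one_mulVec, dotProduct_sub, dotProduct_smul,
    smul_eq_mul] at this
  linarith

lemma abs_dotProduct_mulVec_le {ι : Type*} [Fintype ι] [DecidableEq ι] (N : Matrix ι ι ℝ)
    (x : ι → ℝ) :
    |x ⬝ᵥ (N *ᵥ x)| ≤ ‖LinearMap.toContinuousLinearMap (toEuclideanLin N)‖ * (x ⬝ᵥ x) := by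
  set T := LinearMap.toContinuousLinearMap (toEuclideanLin N)
  set y := WithLp.toLp 2 x
  have hinner : x ⬝ᵥ (N *ᵥ x) = inner ℝ y (T y) := by
    rw [EuclideanSpace.inner_eq_star_dotProduct, dotProduct_comm]; rfl
  have hnorm : x ⬝ᵥ x = ‖y‖ ^ 2 := by
    rw [← real_inner_self_eq_norm_sq, EuclideanSpace.inner_eq_star_dotProduct]; rfl
  calc |x ⬝ᵥ (N *ᵥ x)| = |inner ℝ y (T y)| := by rw [hinner]
    _ ≤ ‖y‖ * ‖T y‖ := abs_real_inner_le_norm _ _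
    _ ≤ ‖y‖ * (‖T‖ * ‖y‖) := by gcongr; exact T.le_opNorm y
    _ = ‖T‖ * (x ⬝ᵥ x) := by rw [hnorm]; ring

lemma HasDerivAt.const_mulVec {ι ε : Type*} [Fintype ι] [Fintype ε] (A : Matrix ι ε ℝ)
    {x : ℝ → ε → ℝ} {x' : ε → ℝ} {t : ℝ} (hx : HasDerivAt x x' t) :
    HasDerivAt (fun s => A *ᵥ x s) (A *ᵥ x') t :=
  (A.mulVecLin.toContinuousLinearMap.hasFDerivAt (x := x t)).comp_hasDerivAt t hx

lemma HasDerivAt.half_dotProduct_self {ι : Type*} [Fintype ι] {x : ℝ → ι → ℝ} {x' : ι → ℝ}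
    {t : ℝ} (hx : HasDerivAt x x' t) :
    HasDerivAt (fun s => (1 / 2) * (x s ⬝ᵥ x s)) (x t ⬝ᵥ x') t := by
  have hsum : HasDerivAt (fun s => ∑ i, x s i * x s i) (∑ i, (x' i * x t i + x t i * x' i)) t :=
    HasDerivAt.fun_sum fun i _ => (hasDerivAt_pi.1 hx i).mul (hasDerivAt_pi.1 hx i)
  refine (hsum.const_mul (1 / 2)).congr_deriv ?_
  simp only [dotProduct, Finset.mul_sum]
  exact Finset.sum_congr rfl fun i _ => by ring

lemma le_mul_exp_of_hasDerivAt_le {V V' : ℝ → ℝ} {α : ℝ} (hV : ∀ t, HasDerivAt V (V' t) t)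
    (hV' : ∀ t, V' t ≤ -α * V t) {t : ℝ} (ht : 0 ≤ t) : V t ≤ V 0 * Real.exp (-α * t) := by
  have hW : ∀ s, HasDerivAt (fun s => V s * Real.exp (α * s))
      (V' s * Real.exp (α * s) + V s * (Real.exp (α * s) * α)) s := fun s =>
    (hV s).mul (((hasDerivAt_id s).const_mul α).exp.congr_deriv (by simp))
  have hanti := antitone_of_hasDerivAt_nonpos hW fun s => by
    have := mul_le_mul_of_nonneg_right (hV' s) (Real.exp_pos (α * s)).le
    simp only [Pi.zero_apply]
    linarith
  have := hanti ht
  simp only [mul_zero, Real.exp_zero, mul_one] at this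
  rw [neg_mul, Real.exp_neg, ← div_eq_mul_inv, le_div_iff₀ (Real.exp_pos _)]
  exact this

lemma tendsto_zero_of_dotProduct_self_le_mul_exp {ι : Type*} [Fintype ι] {x : ℝ → ι → ℝ}
    {C α : ℝ} (hα : 0 < α) (hx : ∀ t, 0 ≤ t → x t ⬝ᵥ x t ≤ C * Real.exp (-α * t)) :
    Tendsto x atTop (𝓝 0) := by
  have hbound : Tendsto (fun t => √(C * Real.exp (-α * t))) atTop (𝓝 0) := by
    have := (Real.tendsto_exp_neg_atTop_nhds_zero.comp (tendsto_id.const_mul_atTop hα)).const_mul C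
    simpa using this.sqrt
  refine tendsto_pi_nhds.2 fun i => squeeze_zero_norm' ?_ hbound
  filter_upwards [eventually_ge_atTop 0] with t ht
  rw [Real.norm_eq_abs, ← Real.sqrt_mul_self_eq_abs]
  refine Real.sqrt_le_sqrt ((?_ : _ ≤ x t ⬝ᵥ x t).trans (hx t ht))
  exact Finset.single_le_sum (f := fun j => x t j * x t j) (fun j _ => mul_self_nonneg _)
    (Finset.mem_univ i)

lemma mul_lt_of_lt_div_of_nonneg {x a s : ℝ} (hx : 0 ≤ x) (hs : 0 ≤ s) (h : x < a / s) :
    x * s < a := by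
  rcases hs.eq_or_lt with rfl | hs
  · rw [div_zero] at h
    linarith
  · exact (lt_div_iff₀ hs).1 h

section Incidence

variable {n e : ℕ} {tl hd : Fin e → Fin n}

lemma vecMul_inc_apply (g : Fin n → ℝ) (k : Fin e) :
    (g ᵥ* inc n e tl hd) k = if tl k = hd k then g (tl k) else g (tl k) - g (hd k) := by
  simp only [vecMul, dotProduct, inc, of_apply, mul_ite, mul_one, mul_neg, mul_zero]
  split_ifs with h
  · simp +contextual [← h]
  · have hsplit : ∀ i, (if i = tl k then g i else if i = hd k then -g i else 0) =
        (if i = tl k then g i else 0) + (if i = hd k then -g i else 0) := by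
      intro i
      split_ifs <;> simp_all
    simp [hsplit, Finset.sum_add_distrib, sub_eq_add_neg]

lemma sum_inc_apply_eq_zero {k : Fin e} (hk : tl k ≠ hd k) : ∑ i, inc n e tl hd i k = 0 := by
  simpa [vecMul, dotProduct, hk] using vecMul_inc_apply (tl := tl) (hd := hd) 1 k

lemma Conn.eq_of_vecMul_inc_eq_zero (hconn : Conn n e tl hd) {g : Fin n → ℝ}
    (hg : g ᵥ* inc n e tl hd = 0) (i j : Fin n) : g i = g j := by
  induction hconn i j with
  | refl => rfl
  | tail _ hedge ih =>
    obtain ⟨k, ⟨rfl, rfl⟩ | ⟨rfl, rfl⟩⟩ := hedge <;>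
    · have hk := congrFun hg k
      rw [vecMul_inc_apply] at hk
      split_ifs at hk with h <;> simp_all [sub_eq_zero]

lemma Conn.tl_ne_hd (hconn : Conn n e tl hd) (he : e ≤ n - 1) (k : Fin e) : tl k ≠ hd k := by
  intro hloop
  have hinj : Function.Injective (vecMulLinear (inc n e tl hd)) := by
    refine (injective_iff_map_eq_zero _).2 fun g hg => funext fun i => ?_
    have hk := congrFun hg k
    rw [vecMulLinear_apply, vecMul_inc_apply, if_pos hloop] at hk
    simpa [hconn.eq_of_vecMul_inc_eq_zero hg i (tl k)] using hk
  have := LinearMap.finrank_le_finrank_of_injective hinj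
  simp only [Module.finrank_fin_fun] at this
  have := k.pos
  omega

lemma Conn.inc_kronecker_one_transpose_mulVec_eq_zero (hconn : Conn n e tl hd) (he : e ≤ n - 1)
    {m : ℕ} (v : Fin m → ℝ) :
    (inc n e tl hd ⊗ₖ (1 : Matrix (Fin m) (Fin m) ℝ))ᵀ *ᵥ (fun il => v il.2) = 0 := by
  ext ⟨k, j⟩
  simp [kronecker_one_transpose_mulVec, sum_inc_apply_eq_zero (hconn.tl_ne_hd he k)]

end Incidence

section FormationControl

variable {ι ε : Type*} [Fintype ι] [Fintype ε]

lemma closedLoop_eq (B M : Matrix ι ε ℝ) (w κ : ℝ) (p pstar : ι → ℝ) :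
    -((w • (B * Bᵀ) - κ • (M * Bᵀ)) *ᵥ p) + (w • (B * Bᵀ)) *ᵥ pstar =
      -(w • (B *ᵥ (Bᵀ *ᵥ p - Bᵀ *ᵥ pstar))) + κ • (M *ᵥ (Bᵀ *ᵥ p - Bᵀ *ᵥ pstar))
        + κ • (M *ᵥ (Bᵀ *ᵥ pstar)) := by
  simp only [sub_mulVec, smul_mulVec, ← mulVec_mulVec, mulVec_sub]
  module

lemma hasDerivAt_formationError {p : ℝ → ι → ℝ} {B M : Matrix ι ε ℝ} {w κ : ℝ}
    {pstar : ι → ℝ} (hBM : Bᵀ *ᵥ (M *ᵥ (Bᵀ *ᵥ pstar)) = 0)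
    (hp : ∀ t, HasDerivAt p (-((w • (B * Bᵀ) - κ • (M * Bᵀ)) *ᵥ p t) + (w • (B * Bᵀ)) *ᵥ pstar) t)
    (t : ℝ) :
    HasDerivAt (fun s => Bᵀ *ᵥ p s - Bᵀ *ᵥ pstar)
      (-(w • ((Bᵀ * B) *ᵥ (Bᵀ *ᵥ p t - Bᵀ *ᵥ pstar)))
        + κ • ((Bᵀ * M) *ᵥ (Bᵀ *ᵥ p t - Bᵀ *ᵥ pstar))) t := by
  have := ((hp t).const_mulVec Bᵀ).sub_const (Bᵀ *ᵥ pstar)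
  rwa [closedLoop_eq, mulVec_add, mulVec_add, mulVec_neg, mulVec_smul, mulVec_smul, mulVec_smul,
    hBM, smul_zero, add_zero, mulVec_mulVec, mulVec_mulVec] at this

lemma dotProduct_errorDynamics_le [DecidableEq ε] {S N : Matrix ε ε ℝ} (hS : S.IsHermitian)
    {l : ℝ} (hl : ∀ (ν : ℝ) (v : ε → ℝ), v ≠ 0 → S *ᵥ v = ν • v → l ≤ ν) {w : ℝ} (hw : 0 ≤ w)
    (κ : ℝ) (x : ε → ℝ) :
    x ⬝ᵥ (-(w • (S *ᵥ x)) + κ • (N *ᵥ x)) ≤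
      -(w * l - |κ| * ‖LinearMap.toContinuousLinearMap (toEuclideanLin N)‖) * (x ⬝ᵥ x) := by
  have hSx := mul_le_mul_of_nonneg_left (hS.mul_dotProduct_self_le hl x) hw
  have hN : κ * (x ⬝ᵥ (N *ᵥ x)) ≤
      |κ| * (‖LinearMap.toContinuousLinearMap (toEuclideanLin N)‖ * (x ⬝ᵥ x)) :=
    calc κ * (x ⬝ᵥ (N *ᵥ x)) ≤ |κ| * |x ⬝ᵥ (N *ᵥ x)| := by rw [← abs_mul]; exact le_abs_self _
      _ ≤ _ := by gcongr; exact abs_dotProduct_mulVec_le N x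
  simp only [dotProduct_add, dotProduct_neg, dotProduct_smul, smul_eq_mul]
  linarith

end FormationControl

theorem stmt7_general (n m : ℕ)
    (tl hd : Fin (n - 1) → Fin n) (hconn : Conn n (n - 1) tl hd)
    (wstar : ℝ) (hw : 0 < wstar)
    (Bb : Matrix (Fin n × Fin m) (Fin (n - 1) × Fin m) ℝ)
    (hBb : Bb = inc n (n - 1) tl hd ⊗ₖ (1 : Matrix (Fin m) (Fin m) ℝ))
    (Mhat : Matrix (Fin n × Fin m) (Fin (n - 1) × Fin m) ℝ)
    (pstar : Fin n × Fin m → ℝ) (vstar : Fin m → ℝ) (κ : ℝ)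
    (zstar : Fin (n - 1) × Fin m → ℝ) (hz : zstar = Bbᵀ *ᵥ pstar)
    (hM : Mhat *ᵥ zstar = fun il => vstar il.2)
    (lmin : ℝ)
    (hlmin_min : ∀ (ν : ℝ) (v : Fin (n - 1) × Fin m → ℝ), v ≠ 0 →
      (Bbᵀ * Bb) *ᵥ v = ν • v → lmin ≤ ν)
    (snorm : ℝ)
    (hsnorm : snorm = ‖LinearMap.toContinuousLinearMap (Matrix.toEuclideanLin (Bbᵀ * Mhat))‖)
    (hκ : |κ| < wstar * lmin / snorm)
    (p : ℝ → Fin n × Fin m → ℝ)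
    (hp : ∀ t : ℝ, HasDerivAt p
      (-((wstar • (Bb * Bbᵀ) - κ • (Mhat * Bbᵀ)) *ᵥ p t)
        + (wstar • (Bb * Bbᵀ)) *ᵥ pstar) t) :
    ∃ α > (0:ℝ),
      (∀ t : ℝ, ∃ d : ℝ,
        HasDerivAt (fun s : ℝ =>
          (1/2) * ((Bbᵀ *ᵥ p s - zstar) ⬝ᵥ (Bbᵀ *ᵥ p s - zstar))) d t ∧
        d ≤ -α * ((1/2) * ((Bbᵀ *ᵥ p t - zstar) ⬝ᵥ (Bbᵀ *ᵥ p t - zstar)))) ∧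
      (∀ t : ℝ, 0 ≤ t →
        (Bbᵀ *ᵥ p t - zstar) ⬝ᵥ (Bbᵀ *ᵥ p t - zstar) ≤
          ((Bbᵀ *ᵥ p 0 - zstar) ⬝ᵥ (Bbᵀ *ᵥ p 0 - zstar)) * Real.exp (-α * t)) ∧
      Tendsto (fun t : ℝ =>
          -((wstar • (Bb * Bbᵀ) - κ • (Mhat * Bbᵀ)) *ᵥ p t)
            + (wstar • (Bb * Bbᵀ)) *ᵥ pstar)
        atTop (𝓝 (κ • fun il : Fin n × Fin m => vstar il.2)) := by
  subst hz
  set c : Fin n × Fin m → ℝ := fun il => vstar il.2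
  set e : ℝ → Fin (n - 1) × Fin m → ℝ := fun t => Bbᵀ *ᵥ p t - Bbᵀ *ᵥ pstar
  have hBc : Bbᵀ *ᵥ c = 0 :=
    hBb ▸ hconn.inc_kronecker_one_transpose_mulVec_eq_zero le_rfl vstar
  set α := wstar * lmin - |κ| * snorm with hα_def
  have hα : 0 < α :=
    sub_pos.2 (mul_lt_of_lt_div_of_nonneg (abs_nonneg κ) (hsnorm ▸ norm_nonneg _) hκ)
  have hV := fun t => (hasDerivAt_formationError (by rw [hM, hBc]) hp t).half_dotProduct_self
  have hdiss : ∀ t, e t ⬝ᵥ (-(wstar • ((Bbᵀ * Bb) *ᵥ e t)) + κ • ((Bbᵀ * Mhat) *ᵥ e t)) ≤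
      -(2 * α) * ((1 / 2) * (e t ⬝ᵥ e t)) := fun t =>
    (dotProduct_errorDynamics_le (by simpa using isHermitian_conjTranspose_mul_self Bb)
      hlmin_min hw.le κ (e t)).trans_eq (by rw [hα_def, hsnorm]; ring)
  have hdecay : ∀ t, 0 ≤ t → e t ⬝ᵥ e t ≤ (e 0 ⬝ᵥ e 0) * Real.exp (-(2 * α) * t) :=
    fun t ht => by linarith [le_mul_exp_of_hasDerivAt_le hV hdiss ht]
  refine ⟨2 * α, by positivity, fun t => ⟨_, hV t, hdiss t⟩, hdecay, ?_⟩
  have hcont : Continuous fun x => -(wstar • (Bb *ᵥ x)) + κ • (Mhat *ᵥ x) + κ • c := by fun_prop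
  have hlim :=
    (hcont.tendsto 0).comp (tendsto_zero_of_dotProduct_self_le_mul_exp (by positivity) hdecay)
  simp only [mulVec_zero, smul_zero, neg_zero, zero_add] at hlim
  exact hlim.congr fun t => by rw [closedLoop_eq, hM]; rfl

/-- Lyapunov bound on `κ` for a tree graph with uniform weight `w*`:
if `|κ| < w* λ_min(B̄ᵀB̄)/‖B̄ᵀM̂‖₂`, the error `e = B̄ᵀp - z*` satisfies
`dV/dt ≤ -αV` for `V = ‖e‖²/2`, hence `e → 0` exponentially and
`ṗ → κ (1ₙ ⊗ v*)`. -/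
theorem stmt7 (n m : ℕ) (hn : 2 ≤ n) (hm : 1 ≤ m)
    (tl hd : Fin (n - 1) → Fin n) (hconn : Conn n (n - 1) tl hd)
    (wstar : ℝ) (hw : 0 < wstar)
    (Bb : Matrix (Fin n × Fin m) (Fin (n - 1) × Fin m) ℝ)
    (hBb : Bb = inc n (n - 1) tl hd ⊗ₖ (1 : Matrix (Fin m) (Fin m) ℝ))
    (Mhat : Matrix (Fin n × Fin m) (Fin (n - 1) × Fin m) ℝ)
    (pstar : Fin n × Fin m → ℝ) (vstar : Fin m → ℝ) (κ : ℝ)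
    (zstar : Fin (n - 1) × Fin m → ℝ) (hz : zstar = Bbᵀ *ᵥ pstar)
    (hM : Mhat *ᵥ zstar = fun il => vstar il.2)
    (lmin : ℝ)
    (hlmin_ev : ∃ u : Fin (n - 1) × Fin m → ℝ, u ≠ 0 ∧ (Bbᵀ * Bb) *ᵥ u = lmin • u)
    (hlmin_min : ∀ (ν : ℝ) (v : Fin (n - 1) × Fin m → ℝ), v ≠ 0 →
      (Bbᵀ * Bb) *ᵥ v = ν • v → lmin ≤ ν)
    (snorm : ℝ)
    (hsnorm : snorm = ‖LinearMap.toContinuousLinearMap (Matrix.toEuclideanLin (Bbᵀ * Mhat))‖)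
    (hκ : |κ| < wstar * lmin / snorm)
    (p : ℝ → Fin n × Fin m → ℝ)
    (hp : ∀ t : ℝ, HasDerivAt p
      (-((wstar • (Bb * Bbᵀ) - κ • (Mhat * Bbᵀ)) *ᵥ p t)
        + (wstar • (Bb * Bbᵀ)) *ᵥ pstar) t) :
    ∃ α > (0:ℝ),
      (∀ t : ℝ, ∃ d : ℝ,
        HasDerivAt (fun s : ℝ =>
          (1/2) * ((Bbᵀ *ᵥ p s - zstar) ⬝ᵥ (Bbᵀ *ᵥ p s - zstar))) d t ∧
        d ≤ -α * ((1/2) * ((Bbᵀ *ᵥ p t - zstar) ⬝ᵥ (Bbᵀ *ᵥ p t - zstar)))) ∧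
      (∀ t : ℝ, 0 ≤ t →
        (Bbᵀ *ᵥ p t - zstar) ⬝ᵥ (Bbᵀ *ᵥ p t - zstar) ≤
          ((Bbᵀ *ᵥ p 0 - zstar) ⬝ᵥ (Bbᵀ *ᵥ p 0 - zstar)) * Real.exp (-α * t)) ∧
      Tendsto (fun t : ℝ =>
          -((wstar • (Bb * Bbᵀ) - κ • (Mhat * Bbᵀ)) *ᵥ p t)
            + (wstar • (Bb * Bbᵀ)) *ᵥ pstar)
        atTop (𝓝 (κ • fun il : Fin n × Fin m => vstar il.2)) :=
  stmt7_general n m tl hd hconn wstar hw Bb hBb Mhat pstar vstar κ zstar hz hM lmin hlmin_min snorm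
    hsnorm hκ p hp
end

section
/- Consider two agents in R^m with dynamics ṗ₁ = -(z₁₂ - z₁₂*) and ṗ₂ = a z₁₂ - z₁₂* where z₁₂ = p₁ - p₂, a > 0, and z₁₂* is a fixed target. Then z₁₂(t) → 2 z₁₂*/(a+1) and both ṗ₁(t), ṗ₂(t) → ((a-1)/(a+1)) z₁₂* as t → ∞; in particular, if a ≠ 1 the agents converge to a distorted relative position and move forever with a common nonzero residual velocity (when z₁₂* ≠ 0). -/
open Filter Topology

/-!
The relative position obeys the stable affine ODE `ż = 2 z* - (a + 1) z`, so its deviation from the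
equilibrium `2 z* / (a + 1)` decays like `exp (-(a + 1) t)`; both velocities are affine in `z` and
converge with it.
-/

section LinearODE

variable {E : Type*} [NormedAddCommGroup E] [NormedSpace ℝ E] {w : ℝ → E} {k : ℝ}

theorem eq_exp_mul_smul_of_hasDerivAt_smul (hw : ∀ t, HasDerivAt w (k • w t) t) (t : ℝ) :
    w t = Real.exp (k * t) • w 0 := by
  have hderiv_zero : ∀ s, HasDerivAt (fun s => Real.exp (-k * s) • w s) 0 s := fun s => by
    have he : HasDerivAt (fun s => Real.exp (-k * s)) (-k * Real.exp (-k * s)) s := by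
      simpa [mul_comm] using ((hasDerivAt_id s).const_mul (-k)).exp
    refine (he.smul (hw s)).congr_deriv ?_
    rw [smul_smul]
    module
  have h := is_const_of_deriv_eq_zero (fun s => (hderiv_zero s).differentiableAt)
    (fun s => (hderiv_zero s).deriv) t 0
  simp only [mul_zero, Real.exp_zero, one_smul] at h
  rw [← h, smul_smul, ← Real.exp_add]
  simp

theorem tendsto_zero_of_hasDerivAt_smul (hk : k < 0) (hw : ∀ t, HasDerivAt w (k • w t) t) :
    Tendsto w atTop (𝓝 0) := by
  have hexp : Tendsto (fun t => Real.exp (k * t)) atTop (𝓝 0) :=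
    Real.tendsto_exp_atBot.comp (tendsto_id.const_mul_atTop_of_neg hk)
  simpa [← funext (eq_exp_mul_smul_of_hasDerivAt_smul hw)] using hexp.smul_const (w 0)

theorem tendsto_of_hasDerivAt_sub_smul {z : ℝ → E} {b : E} {l : ℝ} (hl : 0 < l)
    (hz : ∀ t, HasDerivAt z (b - l • z t) t) : Tendsto z atTop (𝓝 (l⁻¹ • b)) := by
  have hw : ∀ t, HasDerivAt (fun t => z t - l⁻¹ • b) ((-l) • (z t - l⁻¹ • b)) t := fun t => by
    convert (hz t).sub_const (l⁻¹ • b) using 1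
    rw [smul_sub, neg_smul, neg_smul, smul_inv_smul₀ hl.ne']
    abel
  simpa using (tendsto_zero_of_hasDerivAt_smul (neg_neg_of_pos hl) hw).add_const (l⁻¹ • b)

end LinearODE

/-- Two agents where agent 2 mismeasures the relative position by scale `a > 0`:
`z₁₂(t) → 2z₁₂*/(a+1)` and both velocities converge to `((a-1)/(a+1)) z₁₂*`. -/
theorem stmt8 (m : ℕ) (a : ℝ) (ha : 0 < a) (zstar : Fin m → ℝ)
    (p₁ p₂ : ℝ → Fin m → ℝ)
    (hp₁ : ∀ t : ℝ, HasDerivAt p₁ (-((p₁ t - p₂ t) - zstar)) t)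
    (hp₂ : ∀ t : ℝ, HasDerivAt p₂ (a • (p₁ t - p₂ t) - zstar) t) :
    Tendsto (fun t : ℝ => p₁ t - p₂ t) atTop (𝓝 ((2 / (a + 1)) • zstar)) ∧
    Tendsto (fun t : ℝ => -((p₁ t - p₂ t) - zstar)) atTop
      (𝓝 (((a - 1) / (a + 1)) • zstar)) ∧
    Tendsto (fun t : ℝ => a • (p₁ t - p₂ t) - zstar) atTop
      (𝓝 (((a - 1) / (a + 1)) • zstar)) := by
  have ha₁ : a + 1 ≠ 0 := by positivity
  have hz : ∀ t, HasDerivAt (fun t => p₁ t - p₂ t)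
      ((2 : ℝ) • zstar - (a + 1) • (p₁ t - p₂ t)) t := fun t =>
    ((hp₁ t).sub (hp₂ t)).congr_deriv (by module)
  have hlim := tendsto_of_hasDerivAt_sub_smul (by positivity) hz
  rw [smul_smul, inv_mul_eq_div] at hlim
  have hv₁ : ((a - 1) / (a + 1)) • zstar = -((2 / (a + 1)) • zstar - zstar) := by
    match_scalars
    field_simp
    ring
  have hv₂ : ((a - 1) / (a + 1)) • zstar = a • (2 / (a + 1)) • zstar - zstar := by
    match_scalars
    field_simp
    ring
  exact ⟨hlim, hv₁ ▸ (hlim.sub_const zstar).neg, hv₂ ▸ (hlim.const_smul a).sub_const zstar⟩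
end

section
/- Define M̆ = -(D_x B̄ - B̄ (B̄^T B̄)^{-1} B̄^T D_x B̄) D̄_ω for a tree graph with incidence matrix B. If D_x = a*(I_n ⊗ R*) for some a* > 0 and R* ∈ SO(m), then M̆ = 0. -/
open Matrix Kronecker

lemma ker_incT (n e : ℕ) (tl hd : Fin e → Fin n) (y : Fin n → ℝ)
    (hy : (inc n e tl hd)ᵀ.mulVecLin y = 0) (k : Fin e) : y (tl k) = y (hd k) := by
  by_cases h : tl k = hd k
  · rw [h]
  · have hk := congrFun hy k
    simp only [mulVecLin_apply, mulVec, dotProduct, transpose_apply, inc, Matrix.of_apply,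
      Pi.zero_apply] at hk
    have : ∀ i, (if i = tl k then (1:ℝ) else if i = hd k then -1 else 0) * y i
        = (if i = tl k then y i else 0) + (if i = hd k then -y i else 0) := by
      intro i
      rcases eq_or_ne i (tl k) with h1 | h1
      · subst h1; simp [h]
      · rcases eq_or_ne i (hd k) with h2 | h2
        · subst h2
          have h' : ¬ hd k = tl k := fun hh => h hh.symm
          simp [h']
        · simp [h1, h2]
    rw [Finset.sum_congr rfl (fun i _ => this i), Finset.sum_add_distrib,
      Finset.sum_ite_eq' _ (tl k), Finset.sum_ite_eq' _ (hd k)] at hk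
    simp at hk
    linarith

lemma gram_unit (n : ℕ) (hn : 2 ≤ n) (tl hd : Fin (n-1) → Fin n)
    (hconn : Conn n (n - 1) tl hd) :
    IsUnit ((inc n (n-1) tl hd)ᵀ * inc n (n-1) tl hd) := by
  set A := inc n (n-1) tl hd with hA
  have hi0 : 0 < n := by omega
  have hker : LinearMap.ker Aᵀ.mulVecLin ≤
      Submodule.span ℝ {(fun _ => (1:ℝ) : Fin n → ℝ)} := by
    intro y hy
    have hconst : ∀ i j : Fin n, y i = y j := by
      intro i j
      refine Relation.ReflTransGen.head_induction_on (hconn i j) rfl ?_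
      intro a c hac _ hcj
      obtain ⟨k, ⟨rfl, rfl⟩ | ⟨rfl, rfl⟩⟩ := hac
      · rw [ker_incT n (n-1) tl hd y hy k]; exact hcj
      · rw [← ker_incT n (n-1) tl hd y hy k]; exact hcj
    have : y = y ⟨0, hi0⟩ • (fun _ => (1:ℝ)) := by
      funext i; simp [hconst i ⟨0, hi0⟩]
    rw [this]
    exact Submodule.smul_mem _ _ (Submodule.mem_span_singleton_self _)
  have h1 : Module.finrank ℝ (LinearMap.ker Aᵀ.mulVecLin) ≤ 1 := by
    calc Module.finrank ℝ (LinearMap.ker Aᵀ.mulVecLin)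
        ≤ Module.finrank ℝ (Submodule.span ℝ {(fun _ => (1:ℝ) : Fin n → ℝ)}) :=
          Submodule.finrank_mono hker
      _ = 1 := finrank_span_singleton (by
          intro h; have := congrFun h ⟨0, hi0⟩; simp at this)
  have hrn : Module.finrank ℝ (LinearMap.range Aᵀ.mulVecLin)
      + Module.finrank ℝ (LinearMap.ker Aᵀ.mulVecLin) = n := by
    rw [LinearMap.finrank_range_add_finrank_ker]
    simp
  have h2 : Module.finrank ℝ (LinearMap.range Aᵀ.mulVecLin) ≤ n - 1 := by
    have := Submodule.finrank_le (LinearMap.range Aᵀ.mulVecLin)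
    simpa using this
  have hrankT : Aᵀ.rank = n - 1 := by
    rw [Matrix.rank]
    omega
  have hrank : A.rank = n - 1 := by rw [← Matrix.rank_transpose, hrankT]
  have hkerA : LinearMap.ker A.mulVecLin = ⊥ := by
    have hrn2 : Module.finrank ℝ (LinearMap.range A.mulVecLin)
        + Module.finrank ℝ (LinearMap.ker A.mulVecLin) = n - 1 := by
      rw [LinearMap.finrank_range_add_finrank_ker]
      simp
    have : Module.finrank ℝ (LinearMap.ker A.mulVecLin) = 0 := by
      have hr := hrank
      rw [Matrix.rank] at hr
      omega
    exact Submodule.finrank_eq_zero.mp this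
  have hk0 : LinearMap.ker (Aᵀ * A).mulVecLin = ⊥ := by
    rw [Matrix.ker_mulVecLin_transpose_mul_self, hkerA]
  rw [← Matrix.mulVec_injective_iff_isUnit]
  have hinj := LinearMap.ker_eq_bot.mp hk0
  exact fun x y hxy => hinj (by rw [Matrix.mulVecLin_apply, Matrix.mulVecLin_apply]; exact hxy)

/-- For a tree graph, if `D_x = a*(Iₙ ⊗ R*)` with `a* > 0` and `R* ∈ SO(m)`, then
`M̆ = -(D_x B̄ - B̄ (B̄ᵀB̄)⁻¹ B̄ᵀ D_x B̄) D̄_ω = 0`. -/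
theorem stmt13 (n m : ℕ) (hn : 2 ≤ n) (tl hd : Fin (n - 1) → Fin n)
    (hconn : Conn n (n - 1) tl hd)
    (w : Fin (n - 1) → ℝ) (hw : ∀ k, 0 < w k)
    (astar : ℝ) (ha : 0 < astar)
    (R : Matrix (Fin m) (Fin m) ℝ) (hR : Rᵀ * R = 1) (hdet : R.det = 1) :
    let Bb := inc n (n - 1) tl hd ⊗ₖ (1 : Matrix (Fin m) (Fin m) ℝ)
    let Dw := Matrix.diagonal w ⊗ₖ (1 : Matrix (Fin m) (Fin m) ℝ)
    let Dx := astar • ((1 : Matrix (Fin n) (Fin n) ℝ) ⊗ₖ R);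
    -((Dx * Bb - Bb * (Bbᵀ * Bb)⁻¹ * (Bbᵀ * Dx * Bb)) * Dw) = 0 := by
  intro Bb Dw Dx
  simp only [Bb, Dw, Dx]
  set A := inc n (n - 1) tl hd with hA
  have hG : IsUnit (Aᵀ * A) := gram_unit n hn tl hd hconn
  have hGdet : IsUnit (Aᵀ * A).det := (Matrix.isUnit_iff_isUnit_det _).mp hG
  have hBbT : (A ⊗ₖ (1 : Matrix (Fin m) (Fin m) ℝ))ᵀ
      = Aᵀ ⊗ₖ (1 : Matrix (Fin m) (Fin m) ℝ) := by
    rw [← kroneckerMap_transpose, transpose_one]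
  have e1 : (astar • ((1 : Matrix (Fin n) (Fin n) ℝ) ⊗ₖ R))
      * (A ⊗ₖ (1 : Matrix (Fin m) (Fin m) ℝ)) = astar • (A ⊗ₖ R) := by
    rw [Matrix.smul_mul, ← Matrix.mul_kronecker_mul, Matrix.one_mul, Matrix.mul_one]
  have e2 : (Aᵀ ⊗ₖ (1 : Matrix (Fin m) (Fin m) ℝ))
      * (A ⊗ₖ (1 : Matrix (Fin m) (Fin m) ℝ))
      = (Aᵀ * A) ⊗ₖ (1 : Matrix (Fin m) (Fin m) ℝ) := by
    rw [← Matrix.mul_kronecker_mul, Matrix.one_mul]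
  have e3 : ((Aᵀ * A) ⊗ₖ (1 : Matrix (Fin m) (Fin m) ℝ))⁻¹
      = (Aᵀ * A)⁻¹ ⊗ₖ (1 : Matrix (Fin m) (Fin m) ℝ) := by
    rw [Matrix.inv_kronecker, inv_one]
  have e4 : (Aᵀ ⊗ₖ (1 : Matrix (Fin m) (Fin m) ℝ))
      * (astar • ((1 : Matrix (Fin n) (Fin n) ℝ) ⊗ₖ R))
      * (A ⊗ₖ (1 : Matrix (Fin m) (Fin m) ℝ)) = astar • ((Aᵀ * A) ⊗ₖ R) := by
    rw [Matrix.mul_smul, Matrix.smul_mul, ← Matrix.mul_kronecker_mul,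
      ← Matrix.mul_kronecker_mul, Matrix.mul_one, Matrix.one_mul, Matrix.mul_one]
  have e5 : (A ⊗ₖ (1 : Matrix (Fin m) (Fin m) ℝ))
      * ((Aᵀ * A)⁻¹ ⊗ₖ (1 : Matrix (Fin m) (Fin m) ℝ))
      * (astar • ((Aᵀ * A) ⊗ₖ R)) = astar • (A ⊗ₖ R) := by
    rw [← Matrix.mul_kronecker_mul, Matrix.mul_one, Matrix.mul_smul,
      ← Matrix.mul_kronecker_mul, Matrix.one_mul, Matrix.mul_assoc,
      Matrix.nonsing_inv_mul _ hGdet, Matrix.mul_one]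
  rw [hBbT, e1, e2, e3, e4, e5]
  simp
end
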